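/- arXiv:2305.11109 — 3 statements merged into one kernel-verified Lean document; each statement's English description precedes it below -/
import Mathlib

section
/- Let β ≠ 0 be real and a₂, b₂ real parameters. The polynomial system f₁(ρ, X) = (β² − 3)ρ + 4β⁴a₂ − 12β²X² − 4β²b₂ = 0, f₂(ρ, X) = X((β² − 3)ρ − 2β²X² − 2β²b₂) = 0 has exactly 3 real solutions (ρ, X) with ρ > 0 whenever β² − 3 < 0, β²a₂ + 2b₂ < 0, 2β²a₂ − b₂ > 0, and β²a₂ − b₂ > 0. -/
theorem stmt_0 (β a₂ b₂ : ℝ) (hβ : β ≠ 0)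
    (h1 : β^2 - 3 < 0) (h2 : β^2*a₂ + 2*b₂ < 0)
    (h3 : 2*β^2*a₂ - b₂ > 0) (h4 : β^2*a₂ - b₂ > 0) :
    {p : ℝ × ℝ | 0 < p.1 ∧
      (β^2 - 3)*p.1 + 4*β^4*a₂ - 12*β^2*p.2^2 - 4*β^2*b₂ = 0 ∧
      p.2*((β^2 - 3)*p.1 - 2*β^2*p.2^2 - 2*β^2*b₂) = 0}.ncard = 3 := by
  have hb : (0:ℝ) < β^2 := pow_pos (abs_pos.mpr hβ) 2 |>.trans_eq (by rw [sq_abs])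
  have hd : β^2 - 3 ≠ 0 := ne_of_lt h1
  have hd' : (3:ℝ) - β^2 ≠ 0 := by intro h; apply hd; linarith
  have hs5 : (0:ℝ) < (2*β^2*a₂ - b₂)/5 := by linarith
  set s : ℝ := Real.sqrt ((2*β^2*a₂ - b₂)/5) with hs
  have hssq : s^2 = (2*β^2*a₂ - b₂)/5 := Real.sq_sqrt hs5.le
  have hspos : 0 < s := Real.sqrt_pos.mpr hs5
  set ρ₀ : ℝ := 4*β^2*(β^2*a₂ - b₂)/(3 - β^2) with hρ₀
  set ρ₁ : ℝ := (2*β^2*(s^2 + b₂))/(β^2 - 3) with hρ₁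
  have hρ₀pos : 0 < ρ₀ := by
    apply div_pos (by nlinarith) (by linarith)
  have hsb : s^2 + b₂ < 0 := by rw [hssq]; linarith
  have hρ₁pos : 0 < ρ₁ := by
    apply div_pos_of_neg_of_neg (by nlinarith) (by linarith)
  rw [Set.ncard_eq_three]
  refine ⟨(ρ₀, 0), (ρ₁, s), (ρ₁, -s), ?_, ?_, ?_, ?_⟩
  · intro h; have := congrArg Prod.snd h; simp only at this; exact hspos.ne this
  · intro h; have := congrArg Prod.snd h; simp only at this; linarith
  · intro h; have := congrArg Prod.snd h; simp only at this; linarith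
  ext ⟨ρ, X⟩
  simp only [Set.mem_setOf_eq, Set.mem_insert_iff, Set.mem_singleton_iff, Prod.mk.injEq]
  constructor
  · rintro ⟨hpos, e1, e2⟩
    rcases mul_eq_zero.mp e2 with hX | hfac
    · left
      refine ⟨?_, hX⟩
      rw [hρ₀]
      field_simp
      subst hX
      nlinarith [e1]
    · have key : 10*β^2*X^2 = 10*β^2*s^2 := by
        rw [hssq]; linear_combination hfac - e1
      have h10 : (10*β^2 : ℝ) ≠ 0 := by positivity
      have hX2 : X^2 = s^2 := mul_left_cancel₀ h10 key
      have hρeq : ρ = ρ₁ := by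
        rw [hρ₁, ← hX2]
        field_simp
        linear_combination hfac
      have hfactor : (X - s)*(X + s) = 0 := by linear_combination hX2
      rcases mul_eq_zero.mp hfactor with h | h
      · right; left; exact ⟨hρeq, by linarith⟩
      · right; right; exact ⟨hρeq, by linarith⟩
  · rintro (⟨hρ, hX⟩ | ⟨hρ, hX⟩ | ⟨hρ, hX⟩) <;> subst hρ <;> subst hX
    · refine ⟨hρ₀pos, ?_, by ring⟩
      rw [hρ₀]; field_simp; ring
    · have hcancel : (β^2-3)*ρ₁ = 2*β^2*(s^2+b₂) := by rw [hρ₁]; field_simp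
      exact ⟨hρ₁pos, by linear_combination hcancel - 10*β^2*hssq, by linear_combination s*hcancel⟩
    · have hcancel : (β^2-3)*ρ₁ = 2*β^2*(s^2+b₂) := by rw [hρ₁]; field_simp
      exact ⟨hρ₁pos, by linear_combination hcancel - 10*β^2*hssq, by linear_combination (-s)*hcancel⟩
end

section
/- Let β ≠ 0 be real and a₂, b₂ real parameters. The system (β² − 3)ρ + 4β⁴a₂ − 12β²X² − 4β²b₂ = 0, X((β² − 3)ρ − 2β²X² − 2β²b₂) = 0 has exactly 3 real solutions (ρ, X) with ρ > 0 whenever β² − 3 > 0, β²a₂ + 2b₂ > 0, 2β²a₂ − b₂ > 0, and β²a₂ − b₂ < 0. -/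
theorem stmt_1 (β a₂ b₂ : ℝ) (hβ : β ≠ 0)
    (h1 : β^2 - 3 > 0) (h2 : β^2*a₂ + 2*b₂ > 0)
    (h3 : 2*β^2*a₂ - b₂ > 0) (h4 : β^2*a₂ - b₂ < 0) :
    {p : ℝ × ℝ | 0 < p.1 ∧
      (β^2 - 3)*p.1 + 4*β^4*a₂ - 12*β^2*p.2^2 - 4*β^2*b₂ = 0 ∧
      p.2*((β^2 - 3)*p.1 - 2*β^2*p.2^2 - 2*β^2*b₂) = 0}.ncard = 3 := by
  have hβ2 : (0:ℝ) < β^2 := by positivity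
  have hd : β^2 - 3 ≠ 0 := ne_of_gt h1
  set x : ℝ := Real.sqrt ((2*β^2*a₂ - b₂)/5) with hx
  have hx2 : x^2 = (2*β^2*a₂ - b₂)/5 := Real.sq_sqrt (by linarith)
  have hxpos : 0 < x := Real.sqrt_pos.mpr (by linarith)
  set ρ₀ : ℝ := (4*β^2*(b₂ - β^2*a₂))/(β^2-3) with hρ₀
  set ρ₁ : ℝ := 2*β^2*(x^2 + b₂)/(β^2-3) with hρ₁
  have hρ₀pos : 0 < ρ₀ := by
    apply div_pos _ h1; nlinarith
  have hρ₁pos : 0 < ρ₁ := by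
    apply div_pos _ h1
    have : x^2 + b₂ = 2*(β^2*a₂ + 2*b₂)/5 := by rw [hx2]; ring
    nlinarith
  have key : (β^2 - 3)*ρ₁ = 2*β^2*(x^2 + b₂) := by
    rw [hρ₁]; field_simp
  rw [Set.ncard_eq_three]
  refine ⟨(ρ₀, 0), (ρ₁, x), (ρ₁, -x), ?_, ?_, ?_, ?_⟩
  · intro h; have := congrArg Prod.snd h; simp only at this; linarith
  · intro h; have := congrArg Prod.snd h; simp only at this; linarith
  · intro h; have := congrArg Prod.snd h; simp only at this; linarith
  ext ⟨ρ, X⟩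
  simp only [Set.mem_setOf_eq, Set.mem_insert_iff, Set.mem_singleton_iff, Prod.mk.injEq]
  constructor
  · rintro ⟨hρpos, e1, e2⟩
    rcases mul_eq_zero.mp e2 with hX0 | e2'
    · left
      subst hX0
      refine ⟨?_, rfl⟩
      rw [hρ₀, eq_div_iff hd]
      linear_combination e1
    · have hX2 : X^2 = (2*β^2*a₂ - b₂)/5 := by
        have h10 : 10*β^2*X^2 = 10*β^2*((2*β^2*a₂ - b₂)/5) := by
          linear_combination e2' - e1
        exact mul_left_cancel₀ (by positivity) h10
      have hρeq : ρ = ρ₁ := by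
        rw [hρ₁, hx2, ← hX2, eq_div_iff hd]
        linear_combination e2'
      have h' : X^2 = x^2 := by rw [hX2, hx2]
      rcases sq_eq_sq_iff_eq_or_eq_neg.mp h' with h | h
      · right; left; exact ⟨hρeq, h⟩
      · right; right; exact ⟨hρeq, h⟩
  · rintro (⟨h1', h2'⟩ | ⟨h1', h2'⟩ | ⟨h1', h2'⟩) <;> subst h1' <;> subst h2'
    · refine ⟨hρ₀pos, ?_, by ring⟩
      have k0 : (β^2-3)*ρ₀ = 4*β^2*(b₂ - β^2*a₂) := by
        rw [hρ₀]; field_simp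
      linear_combination k0
    · exact ⟨hρ₁pos, by linear_combination key - 10*β^2*hx2, by linear_combination x*key⟩
    · exact ⟨hρ₁pos, by linear_combination key - 10*β^2*hx2, by linear_combination (-x)*key⟩
end

section
/- Let f : ℝ² → ℝ² be given by f(ρ, X) = ((β²−3)ρ + 4β⁴a₂ − 12β²X² − 4β²b₂, X((β²−3)ρ − 2β²X² − 2β²b₂)) with β ≠ 0 and β² ≠ 3. At any zero (ρ*, X*) of f with X* ≠ 0 and 2β²a₂ − b₂ ≠ 0 and β²a₂ + 2b₂ ≠ 0, the Jacobian determinant of f is nonzero. -/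
/-- At any zero `(ρ*, X*)` of the second-order averaged system with `X* ≠ 0`, and
`2β²a₂ - b₂ ≠ 0`, `β²a₂ + 2b₂ ≠ 0`, the Jacobian determinant
`∂f₁/∂ρ ⬝ ∂f₂/∂X - ∂f₁/∂X ⬝ ∂f₂/∂ρ` is nonzero. -/
theorem stmt_18 (β a₂ b₂ ρ X : ℝ) (hβ : β ≠ 0) (hβ3 : β^2 ≠ 3)
    (hzero1 : (β^2 - 3)*ρ + 4*β^4*a₂ - 12*β^2*X^2 - 4*β^2*b₂ = 0)
    (hzero2 : X*((β^2 - 3)*ρ - 2*β^2*X^2 - 2*β^2*b₂) = 0)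
    (hX : X ≠ 0) (h1 : 2*β^2*a₂ - b₂ ≠ 0) (h2 : β^2*a₂ + 2*b₂ ≠ 0) :
    (β^2 - 3) * ((β^2 - 3)*ρ - 6*β^2*X^2 - 2*β^2*b₂)
      - (-(24*β^2*X)) * (X*(β^2 - 3)) ≠ 0 := by
  have hA : (β^2 - 3)*ρ - 2*β^2*X^2 - 2*β^2*b₂ = 0 := by
    rcases mul_eq_zero.mp hzero2 with h | h
    · exact absurd h hX
    · exact h
  have key : (β^2 - 3) * ((β^2 - 3)*ρ - 6*β^2*X^2 - 2*β^2*b₂)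
      - (-(24*β^2*X)) * (X*(β^2 - 3)) = 20*β^2*X^2*(β^2-3) := by
    linear_combination (β^2 - 3) * hA
  rw [key]
  exact mul_ne_zero (mul_ne_zero (mul_ne_zero (by norm_num) (pow_ne_zero 2 hβ))
    (pow_ne_zero 2 hX)) (sub_ne_zero.mpr hβ3)
end
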